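/- Expression of degenerate Whitney numbers via partial Bell polynomials (Theorem 2.15, Y = 1): W_{m,λ}(n,k) = (1/m^k) Σ_{l=k}^{n} C(n,l) B_{l,k}( (1)_{1,λ/m} m, (1)_{2,λ/m} m^2, …, (1)_{l-k+1,λ/m} m^{l-k+1} ) (1)_{n-l,λ}, where B_{l,k} denotes the partial Bell polynomial. -/

import Mathlib

/-- The degenerate falling factorial `(x)_{n,λ} = x(x-λ)⋯(x-(n-1)λ)`, with `(x)_{0,λ} = 1`. -/
def degFall (x lam : ℝ) (n : ℕ) : ℝ :=
  ∏ i ∈ Finset.range n, (x - (i : ℝ) * lam)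

/-- The degenerate Whitney numbers of the second kind. -/
noncomputable def degWhitney (m : ℕ) (lam : ℝ) (n k : ℕ) : ℝ :=
  (1 / ((m : ℝ) ^ k * (k.factorial : ℝ))) *
    ∑ j ∈ Finset.range (k + 1),
      (k.choose j : ℝ) * (-1 : ℝ) ^ (k - j) * degFall ((m : ℝ) * (j : ℝ) + 1) lam n

/-- The partial Bell polynomial `B_{n,k}(x₁, x₂, …)`, defined via the generating function
`(1/k!)(Σ_{j≥1} x_j tʲ/j!)ᵏ = Σ_{n≥k} B_{n,k}(x₁,…,x_{n-k+1}) tⁿ/n!`. -/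
noncomputable def bellPartial (x : ℕ → ℝ) (n k : ℕ) : ℝ :=
  (n.factorial : ℝ) *
    PowerSeries.coeff n
      (((k.factorial : ℝ))⁻¹ •
        (PowerSeries.mk fun j => if j = 0 then 0 else x j / (j.factorial : ℝ)) ^ k)


/-!
Writing `e_λ^x(t) = Σ (x)_{n,λ} tⁿ/n!` for the degenerate exponential, the binomial theorem for
degenerate falling factorials says `e_λ^x e_λ^y = e_λ^{x+y}`. Expanding `(e_λ^m - 1)ᵏ` binomially
then shows that `W_{m,λ}(·,k)` has exponential generating function `(e_λ^m - 1)ᵏ e_λ / (mᵏ k!)`.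
Since `(1)_{j,λ/m} mʲ = (m)_{j,λ}`, the factor `(e_λ^m - 1)ᵏ / k!` is the generating function of the
Bell polynomials in the statement, and the coefficient of a product of two exponential generating
functions is the binomial convolution of their coefficients.
-/

open Finset PowerSeries
open scoped Nat

@[simp]
lemma degFall_zero (x lam : ℝ) : degFall x lam 0 = 1 :=
  prod_range_zero _

lemma degFall_succ (x lam : ℝ) (n : ℕ) :
    degFall x lam (n + 1) = degFall x lam n * (x - n * lam) :=
  prod_range_succ _ n

lemma degFall_zero_left_succ (lam : ℝ) (n : ℕ) : degFall 0 lam (n + 1) = 0 :=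
  prod_eq_zero (mem_range.mpr n.succ_pos) (by simp)

lemma degFall_one_div_mul_pow (c lam : ℝ) (n : ℕ) :
    degFall 1 (lam / c) n * c ^ n = degFall c lam n := by
  rcases eq_or_ne c 0 with rfl | hc
  · cases n <;> simp [degFall_zero_left_succ]
  · rw [degFall, degFall, pow_eq_prod_const c n, ← prod_mul_distrib]
    refine prod_congr rfl fun i _ => ?_
    field_simp

lemma degFall_add (x y lam : ℝ) (n : ℕ) :
    degFall (x + y) lam n =
      ∑ ij ∈ antidiagonal n, (n.choose ij.1 : ℝ) * degFall x lam ij.1 * degFall y lam ij.2 := by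
  induction n with
  | zero => simp
  | succ n ih =>
    rw [degFall_succ, ih, sum_mul]
    simp_rw [mul_assoc]
    rw [sum_antidiagonal_choose_succ_mul (fun i j => degFall x lam i * degFall y lam j),
      ← sum_add_distrib]
    refine sum_congr rfl fun ij hij => ?_
    rw [HasAntidiagonal.mem_antidiagonal] at hij
    rw [← Nat.choose_symm_of_eq_add hij.symm, degFall_succ, degFall_succ, ← hij]
    push_cast
    ring

lemma PowerSeries.factorial_mul_coeff_mul {R : Type*} [CommSemiring R] (f g : R⟦X⟧) (n : ℕ) :
    n ! * coeff n (f * g) =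
      ∑ ij ∈ antidiagonal n,
        (n.choose ij.1 : R) * (ij.1 ! * coeff ij.1 f) * (ij.2 ! * coeff ij.2 g) := by
  rw [coeff_mul, mul_sum]
  refine sum_congr rfl fun ij hij => ?_
  rw [← HasAntidiagonal.mem_antidiagonal.mp hij, ← Nat.add_choose_mul_factorial_mul_factorial,
    Nat.choose_symm_add]
  push_cast
  ring

/-- The degenerate exponential `e_λ^x(t) = (1 + λt)^{x/λ}`, as an exponential generating function.
-/
noncomputable def degExp (lam x : ℝ) : ℝ⟦X⟧ :=
  mk fun n => degFall x lam n / n !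

lemma factorial_mul_coeff_degExp (lam x : ℝ) (n : ℕ) :
    n ! * coeff n (degExp lam x) = degFall x lam n := by
  rw [degExp, coeff_mk, mul_div_cancel₀ _ (by positivity)]

lemma degExp_add (lam x y : ℝ) : degExp lam (x + y) = degExp lam x * degExp lam y := by
  ext n
  refine mul_left_cancel₀ (Nat.cast_ne_zero.mpr n.factorial_ne_zero : (n ! : ℝ) ≠ 0) ?_
  simp only [factorial_mul_coeff_mul, factorial_mul_coeff_degExp, degFall_add, mul_assoc]

lemma degExp_zero (lam : ℝ) : degExp lam 0 = 1 := by
  ext (_ | n) <;> simp [degExp, degFall_zero_left_succ]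

lemma degExp_pow (lam x : ℝ) (j : ℕ) : degExp lam x ^ j = degExp lam (j * x) := by
  induction j with
  | zero => simp [degExp_zero]
  | succ j ih => rw [pow_succ, ih, ← degExp_add]; push_cast; ring_nf

lemma degExp_sub_one_pow_mul (lam x y : ℝ) (k : ℕ) :
    (degExp lam x - 1) ^ k * degExp lam y =
      ∑ j ∈ range (k + 1), ((k.choose j : ℝ) * (-1) ^ (k - j)) • degExp lam (x * j + y) := by
  rw [sub_eq_add_neg, add_pow, sum_mul]
  refine sum_congr rfl fun j _ => ?_
  rw [degExp_add, mul_comm x, ← degExp_pow, mul_smul, smul_eq_C_mul, smul_eq_C_mul]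
  simp only [map_natCast, map_pow, map_neg, map_one]
  ring

lemma degWhitney_eq_factorial_mul_coeff (m : ℕ) (lam : ℝ) (n k : ℕ) :
    degWhitney m lam n k =
      ((m : ℝ) ^ k)⁻¹ * (n ! * coeff n ((k ! : ℝ)⁻¹ • (degExp lam m - 1) ^ k * degExp lam 1)) := by
  rw [smul_mul_assoc, degExp_sub_one_pow_mul, coeff_smul, map_sum]
  simp only [coeff_smul, smul_eq_mul, mul_sum]
  rw [degWhitney, one_div, mul_inv, mul_sum]
  refine sum_congr rfl fun j _ => ?_
  rw [← factorial_mul_coeff_degExp]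
  ring

lemma bellPartial_degFall (c lam : ℝ) (l k : ℕ) :
    bellPartial (degFall c lam) l k = l ! * coeff l ((k ! : ℝ)⁻¹ • (degExp lam c - 1) ^ k) := by
  rw [bellPartial]
  congr
  ext (_ | j) <;> simp [degExp]

lemma bellPartial_eq_zero_of_lt (x : ℕ → ℝ) {l k : ℕ} (h : l < k) : bellPartial x l k = 0 := by
  have hX : X ∣ mk fun j => if j = 0 then 0 else x j / j ! := X_dvd_iff.mpr (by simp)
  rw [bellPartial, coeff_smul, X_pow_dvd_iff.mp (pow_dvd_pow_of_dvd hX k) l h, smul_zero, mul_zero]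

theorem degWhitney_eq_sum_bellPartial_general (m : ℕ) (lam : ℝ) (n k : ℕ) :
    degWhitney m lam n k =
      (1 / (m : ℝ) ^ k) *
        ∑ l ∈ Finset.Icc k n,
          (n.choose l : ℝ) *
            bellPartial (fun j => degFall 1 (lam / (m : ℝ)) j * (m : ℝ) ^ j) l k *
            degFall 1 lam (n - l) := by
  have hx : (fun j => degFall 1 (lam / m) j * (m : ℝ) ^ j) = degFall (m : ℝ) lam :=
    funext (degFall_one_div_mul_pow m lam)
  rw [hx, degWhitney_eq_factorial_mul_coeff, factorial_mul_coeff_mul,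
    Nat.sum_antidiagonal_eq_sum_range_succ
      (fun i j => (n.choose i : ℝ) * (i ! * coeff i _) * (j ! * coeff j (degExp lam 1))),
    one_div]
  simp only [← bellPartial_degFall, factorial_mul_coeff_degExp]
  congr 1
  refine (sum_subset (fun l hl => ?_) fun l hln hl => ?_).symm
  · exact mem_range_succ_iff.mpr (mem_Icc.mp hl).2
  · have hlk : l < k := by
      simp only [mem_Icc, mem_range] at hl hln
      omega
    rw [bellPartial_eq_zero_of_lt _ hlk, mul_zero, zero_mul]

/-- `W_{m,λ}(n,k) = (1/mᵏ) Σ_{l=k}^n C(n,l) B_{l,k}((1)_{1,λ/m}m, …, (1)_{l-k+1,λ/m}m^{l-k+1}) (1)_{n-l,λ}`. -/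
theorem degWhitney_eq_sum_bellPartial (m : ℕ) (hm : 0 < m) (lam : ℝ) (n k : ℕ) (hkn : k ≤ n) :
    degWhitney m lam n k =
      (1 / (m : ℝ) ^ k) *
        ∑ l ∈ Finset.Icc k n,
          (n.choose l : ℝ) *
            bellPartial (fun j => degFall 1 (lam / (m : ℝ)) j * (m : ℝ) ^ j) l k *
            degFall 1 lam (n - l) :=
  degWhitney_eq_sum_bellPartial_general m lam n k
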